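/- In the cubic-graph Independent Set reduction for EF donation, there exists a nonempty envy-free sub-allocation of the constructed instance if and only if G has an independent set of size t. -/

import Mathlib

/-- Utilities of the cubic-graph Independent Set reduction for EF donation. -/
def u16 {V : Type*} [DecidableEq V] (q t : ℕ) (e : Fin q → Sym2 V) :
    Option (Fin q) → (V ⊕ Fin q) → ℕ
  | none, Sum.inl _ => 1
  | none, Sum.inr _ => t
  | some i, Sum.inl v => if v ∈ e i then 1 else 0
  | some i, Sum.inr j => if j = i ∨ (i.val + 1) % q = j.val then 1 else 0

/-- Initial allocation of the cubic-graph reduction. -/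
def π16 (V : Type*) [Fintype V] [DecidableEq V] (q : ℕ) : Option (Fin q) → Finset (V ⊕ Fin q)
  | none => Finset.univ.image Sum.inl
  | some i => {Sum.inr i}

section Aux

variable {V : Type*} [DecidableEq V] {q t : ℕ} {e : Fin q → Sym2 V}

lemma u16_none_inl (v : V) : u16 q t e none (Sum.inl v) = 1 := rfl
lemma u16_none_inr (j : Fin q) : u16 q t e none (Sum.inr j) = t := rfl
lemma u16_some_inl (i : Fin q) (v : V) :
    u16 q t e (some i) (Sum.inl v) = if v ∈ e i then 1 else 0 := rfl
lemma u16_some_inr (i j : Fin q) :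
    u16 q t e (some i) (Sum.inr j) = if j = i ∨ (i.val + 1) % q = j.val then 1 else 0 := rfl

lemma fin_succ_val {q : ℕ} [NeZero q] (i : Fin q) : (i.val + 1) % q = ((i + 1 : Fin q)).val := by
  rw [Fin.val_add, Fin.val_one' q]
  conv_lhs => rw [Nat.add_mod]
  rw [Nat.mod_eq_of_lt i.isLt]

/-- sum of u16 for the special agent over a set of vertex resources -/
lemma sum_u16_none_image (V' : Finset V) :
    (V'.image Sum.inl).sum (u16 q t e none) = V'.card := by
  rw [Finset.sum_image (fun x _ y _ h => Sum.inl_injective h)]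
  simp [u16_none_inl]

lemma sum_u16_some_image (i : Fin q) (V' : Finset V) :
    (V'.image Sum.inl).sum (u16 q t e (some i)) = (V'.filter (fun v => v ∈ e i)).card := by
  rw [Finset.sum_image (fun x _ y _ h => Sum.inl_injective h)]
  simp only [u16_some_inl]
  rw [Finset.sum_boole]
  simp

end Aux

/-- There is a nonempty envy-free sub-allocation of the cubic-graph reduction instance
iff G has an independent set of size t. -/
theorem stmt16 {V : Type*} [Fintype V] [DecidableEq V]
    (G : SimpleGraph V) [DecidableRel G.Adj] [Fintype G.edgeSet]
    (q t : ℕ) (ht : 1 ≤ t)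
    (e : Fin q → Sym2 V)
    (he : ∀ i, e i ∈ G.edgeFinset)
    (hinj : Function.Injective e)
    (hsurj : ∀ s ∈ G.edgeFinset, ∃ i, e i = s)
    (hdeg : ∀ v : V, G.degree v = 3) :
    (∃ π' : Option (Fin q) → Finset (V ⊕ Fin q),
        (∀ a, π' a ⊆ π16 V q a) ∧
        (∃ a, (π' a).Nonempty) ∧
        (∀ a b : Option (Fin q),
          (π' b).sum (u16 q t e a) ≤ (π' a).sum (u16 q t e a))) ↔
      (∃ V' : Finset V, V'.card = t ∧ ∀ v ∈ V', ∀ w ∈ V', ¬ G.Adj v w) := by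
  constructor
  · rintro ⟨π', hsub, ⟨a0, ha0⟩, hEF⟩
    have hsingle : ∀ i : Fin q, (π' (some i)).Nonempty → π' (some i) = {Sum.inr i} := by
      intro i hi
      rcases Finset.subset_singleton_iff.mp (hsub (some i)) with h | h
      · rw [h] at hi; exact absurd hi (by simp)
      · exact h
    have hpull : ∀ i : Fin q, 1 ≤ (π' (some i)).sum (u16 q t e (some i)) →
        (π' (some i)).Nonempty := by
      intro i h
      by_contra hne
      rw [Finset.not_nonempty_iff_eq_empty.mp hne] at h
      simp at h
    -- some edge agent has a nonempty bundle
    have hex : ∃ i : Fin q, (π' (some i)).Nonempty := by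
      cases a0 with
      | some i => exact ⟨i, ha0⟩
      | none =>
        obtain ⟨x, hx⟩ := ha0
        obtain ⟨v, -, rfl⟩ := Finset.mem_image.mp (hsub none hx)
        have hdv : 0 < G.degree v := by rw [hdeg v]; norm_num
        obtain ⟨w, hw⟩ := Finset.card_pos.mp
          (by rwa [G.card_neighborFinset_eq_degree] )
        have hadj : G.Adj v w := (SimpleGraph.mem_neighborFinset G v w).mp hw
        obtain ⟨i, hi⟩ := hsurj s(v,w)
          (SimpleGraph.mem_edgeFinset.mpr (G.mem_edgeSet.mpr hadj))
        refine ⟨i, hpull i ?_⟩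
        refine le_trans ?_ (hEF (some i) none)
        have huv : u16 q t e (some i) (Sum.inl v) = 1 := by simp [u16_some_inl, hi]
        calc 1 = u16 q t e (some i) (Sum.inl v) := huv.symm
          _ ≤ _ := Finset.single_le_sum (fun x _ => Nat.zero_le _) hx
    obtain ⟨i0, hi0⟩ := hex
    haveI : NeZero q := NeZero.of_pos i0.pos
    have hstep : ∀ i : Fin q, (π' (some (i + 1))).Nonempty → (π' (some i)).Nonempty := by
      intro i h
      apply hpull
      have h1 := hEF (some i) (some (i + 1))
      rw [hsingle _ h, Finset.sum_singleton] at h1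
      refine le_trans ?_ h1
      rw [u16_some_inr, if_pos (Or.inr (fin_succ_val i))]
    open Fin.NatCast Fin.CommRing in
    have hprop : ∀ k : ℕ, ∀ i : Fin q,
        (π' (some (i + (k : Fin q)))).Nonempty → (π' (some i)).Nonempty := by
      intro k
      induction k with
      | zero => intro i h; simpa using h
      | succ k ih =>
        intro i h
        apply hstep
        apply ih (i + 1)
        have heq : i + ((k+1 : ℕ) : Fin q) = (i + 1) + (k : Fin q) := by
          push_cast
          ring
        rwa [heq] at h
    open Fin.NatCast Fin.CommRing in
    have hall : ∀ i : Fin q, π' (some i) = {Sum.inr i} := by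
      intro i
      apply hsingle
      have heq : i0 = i + ((i0 - i).val : Fin q) := by
        rw [Fin.cast_val_eq_self]; ring
      exact hprop _ i (heq ▸ hi0)
    -- count bound for each edge agent
    have hcount : ∀ i : Fin q, (π' none).sum (u16 q t e (some i)) ≤ 1 := by
      intro i
      have h1 := hEF (some i) none
      rwa [hall i, Finset.sum_singleton, u16_some_inr, if_pos (Or.inl rfl)] at h1
    set V' := Finset.univ.filter (fun v => Sum.inl v ∈ π' none) with hV'
    have hS : π' none = V'.image Sum.inl := by
      ext x
      constructor
      · intro hx
        obtain ⟨v, -, rfl⟩ := Finset.mem_image.mp (hsub none hx)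
        exact Finset.mem_image_of_mem _ (Finset.mem_filter.mpr ⟨Finset.mem_univ v, hx⟩)
      · intro hx
        obtain ⟨v, hv, rfl⟩ := Finset.mem_image.mp hx
        exact (Finset.mem_filter.mp hv).2
    have hcard : t ≤ V'.card := by
      have h1 := hEF none (some i0)
      rw [hall i0, Finset.sum_singleton, u16_none_inr, hS, sum_u16_none_image] at h1
      exact h1
    have hindep : ∀ v ∈ V', ∀ w ∈ V', ¬ G.Adj v w := by
      intro v hv w hw hadj
      obtain ⟨i, hi⟩ := hsurj s(v,w)
        (SimpleGraph.mem_edgeFinset.mpr (G.mem_edgeSet.mpr hadj))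
      have hvw : v ≠ w := G.ne_of_adj hadj
      have hv' : Sum.inl v ∈ π' none := (Finset.mem_filter.mp hv).2
      have hw' : Sum.inl w ∈ π' none := (Finset.mem_filter.mp hw).2
      have h2 : 2 ≤ (π' none).sum (u16 q t e (some i)) := by
        have hsub2 : ({Sum.inl v, Sum.inl w} : Finset (V ⊕ Fin q)) ⊆ π' none := by
          intro x hx
          rcases Finset.mem_insert.mp hx with rfl | hx
          · exact hv'
          · rw [Finset.mem_singleton.mp hx]; exact hw'
        have huv : u16 q t e (some i) (Sum.inl v) = 1 := by simp [u16_some_inl, hi]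
        have huw : u16 q t e (some i) (Sum.inl w) = 1 := by simp [u16_some_inl, hi]
        calc 2 = ({Sum.inl v, Sum.inl w} : Finset (V ⊕ Fin q)).sum (u16 q t e (some i)) := by
              rw [Finset.sum_pair (by simpa using hvw), huv, huw]
          _ ≤ _ := Finset.sum_le_sum_of_subset hsub2
      have := hcount i
      omega
    obtain ⟨V'', hsub'', hcard''⟩ := Finset.exists_subset_card_eq hcard
    exact ⟨V'', hcard'', fun v hv w hw => hindep v (hsub'' hv) w (hsub'' hw)⟩
  · rintro ⟨V', hVcard, hVind⟩
    refine ⟨fun a => a.elim (V'.image Sum.inl) (fun i => {Sum.inr i}), ?_, ?_, ?_⟩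
    · intro a
      cases a with
      | none =>
        show V'.image Sum.inl ⊆ π16 V q none
        exact Finset.image_subset_image (Finset.subset_univ V')
      | some i => exact subset_rfl
    · refine ⟨none, ?_⟩
      show (V'.image Sum.inl).Nonempty
      exact (Finset.card_pos.mp (by omega)).image _
    · intro a b
      cases a with
      | none =>
        cases b with
        | none => exact le_rfl
        | some j =>
          show ({Sum.inr j} : Finset (V ⊕ Fin q)).sum (u16 q t e none) ≤
            (V'.image Sum.inl).sum (u16 q t e none)
          rw [Finset.sum_singleton, u16_none_inr, sum_u16_none_image, hVcard]
      | some i =>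
        have hown : ({Sum.inr i} : Finset (V ⊕ Fin q)).sum (u16 q t e (some i)) = 1 := by
          rw [Finset.sum_singleton, u16_some_inr, if_pos (Or.inl rfl)]
        cases b with
        | none =>
          show (V'.image Sum.inl).sum (u16 q t e (some i)) ≤
            ({Sum.inr i} : Finset (V ⊕ Fin q)).sum (u16 q t e (some i))
          rw [hown, sum_u16_some_image]
          rw [Finset.card_le_one]
          intro a ha b hb
          rw [Finset.mem_filter] at ha hb
          by_contra hab
          have hz : e i = s(a, b) := (Sym2.mem_and_mem_iff hab).mp ⟨ha.2, hb.2⟩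
          have : G.Adj a b := G.mem_edgeSet.mp (by rw [← hz]; exact SimpleGraph.mem_edgeFinset.mp (he i))
          exact hVind a ha.1 b hb.1 this
        | some j =>
          show ({Sum.inr j} : Finset (V ⊕ Fin q)).sum (u16 q t e (some i)) ≤
            ({Sum.inr i} : Finset (V ⊕ Fin q)).sum (u16 q t e (some i))
          rw [hown, Finset.sum_singleton, u16_some_inr]
          split <;> omega
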